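/- Let L be a Lie algebra over a commutative ring and let I_1, …, I_n be Lie ideals of L with n ≥ 2. Then the fat bracket sum equals the symmetric bracket sum: [[I_1, I_2, …, I_n]] = [[I_1, I_2], …, I_n]_S. -/

import Mathlib

/-- Bracket arrangements of weight `t`: `β¹(a₁) = a₁` and every bracket arrangement of
weight `t ≥ 2` has the form `βᵗ(a₁, …, a_t) = [βᵖ(a₁, …, a_p), β^{t-p}(a_{p+1}, …, a_t)]`. -/
inductive BracketArr : ℕ → Type
  | leaf : BracketArr 1
  | node {p q : ℕ} : BracketArr p → BracketArr q → BracketArr (p + q)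

/-- Evaluation of a bracket arrangement of weight `t` on a `t`-tuple of elements
of a Lie ring. -/
def BracketArr.eval {L : Type*} [LieRing L] : ∀ {t : ℕ}, BracketArr t → (Fin t → L) → L
  | _, .leaf, a => a 0
  | _, .node u v, a =>
      ⁅u.eval (fun i => a (Fin.castAdd _ i)), v.eval (fun i => a (Fin.natAdd _ i))⁆

/-- The left-normed bracket of a list of Lie ideals,
`[[⋯[[I₁, I₂], I₃], …], I_m]` (with junk value `⊥` for the empty list). -/
def lnbIdeal {R : Type*} [CommRing R] {L : Type*} [LieRing L] [LieAlgebra R L] :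
    List (LieIdeal R L) → LieIdeal R L
  | [] => ⊥
  | I :: Is => Is.foldl (fun acc J => ⁅acc, J⁆) I

/-- The symmetric bracket sum `[[I₁, I₂], …, I_n]_S = Σ_{σ ∈ Σ_n}
[[I_{σ(1)}, I_{σ(2)}], …, I_{σ(n)}]` of a family of Lie ideals. -/
def symBracketSum {R : Type*} [CommRing R] {L : Type*} [LieRing L] [LieAlgebra R L]
    {n : ℕ} (I : Fin n → LieIdeal R L) : LieIdeal R L :=
  ⨆ σ : Equiv.Perm (Fin n), lnbIdeal (List.ofFn (fun s => I (σ s)))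

/-- The fat bracket sum `[[I₁, I₂, …, I_n]]`: the Lie ideal generated by all elements
`βᵗ(a_{i₁}, …, a_{i_t})`, where `t ≥ n`, `βᵗ` is a bracket arrangement of weight `t`,
every integer in `{1, …, n}` occurs among the indices `i₁, …, i_t`, and `a_{i_s} ∈ I_{i_s}`. -/
def fatBracketSum {R : Type*} [CommRing R] {L : Type*} [LieRing L] [LieAlgebra R L]
    {n : ℕ} (I : Fin n → LieIdeal R L) : LieIdeal R L :=
  LieSubmodule.lieSpan R L
    {x : L | ∃ t : ℕ, n ≤ t ∧ ∃ β : BracketArr t, ∃ idx : Fin t → Fin n,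
      Function.Surjective idx ∧ ∃ a : Fin t → L,
        (∀ s : Fin t, a s ∈ I (idx s)) ∧ x = β.eval a}

/-!
The inclusion `⊇` holds because a left-normed bracket is itself a bracket arrangement. For `⊆`,
the Jacobi identity gives `⁅X, ⁅Y, Z⁆⁆ ≤ ⁅⁅X, Y⁆, Z⁆ ⊔ ⁅⁅X, Z⁆, Y⁆`, from which the bracket of two
sums of left-normed brackets over all rearrangements of lists `l₁`, `l₂` lies in the sum over all
rearrangements of `l₁ ++ l₂`. By induction on the arrangement, `βᵗ(a_{i₁}, …, a_{i_t})` lies in a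
left-normed bracket of some rearrangement of `I_{i₁}, …, I_{i_t}`. Since `⁅X, J⁆ ≤ X`, deleting
the repeated ideals from such a bracket only enlarges it, leaving a left-normed bracket of a
permutation of `I₁, …, I_n`.
-/

namespace LieSubmodule

variable {R L M : Type*} [CommRing R] [LieRing L] [LieAlgebra R L] [AddCommGroup M] [Module R M]
  [LieRingModule L M]

theorem iSup_lie {ι : Sort*} (I : ι → LieIdeal R L) (N : LieSubmodule R L M) :
    ⁅⨆ i, I i, N⁆ = ⨆ i, ⁅I i, N⁆ := by
  refine le_antisymm ?_ (iSup_le fun i => mono_lie_left N (le_iSup I i))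
  rw [lie_le_iff]
  intro x hx m hm
  refine iSup_induction I (motive := fun y => ⁅y, m⁆ ∈ ⨆ i, ⁅I i, N⁆) hx
    (fun i y hy => le_iSup (fun i => ⁅I i, N⁆) i (lie_mem_lie hy hm)) (by simp) ?_
  intro y z hy hz
  rw [add_lie]
  exact add_mem hy hz

theorem lie_iSup {ι : Sort*} (I : LieIdeal R L) (J : ι → LieIdeal R L) :
    ⁅I, ⨆ i, J i⁆ = ⨆ i, ⁅I, J i⁆ := by
  simp only [lie_comm I, iSup_lie]

end LieSubmodule

namespace LieIdeal

open LieSubmodule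

variable {R L : Type*} [CommRing R] [LieRing L] [LieAlgebra R L]

def colon (K J : LieIdeal R L) : LieIdeal R L where
  carrier := {x | ∀ y ∈ J, ⁅x, y⁆ ∈ K}
  zero_mem' := by simp
  add_mem' hx hx' y hy := by rw [add_lie]; exact add_mem (hx y hy) (hx' y hy)
  smul_mem' r x hx y hy := by rw [smul_lie]; exact K.smul_mem r (hx y hy)
  lie_mem {z x} hx y hy := by
    rw [lie_lie]
    exact sub_mem (K.lie_mem (hx y hy)) (hx _ (J.lie_mem hy))

theorem lie_le_iff_le_colon {I J K : LieIdeal R L} : ⁅I, J⁆ ≤ K ↔ I ≤ colon K J := by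
  rw [lie_le_iff]
  rfl

theorem lie_lieSpan_le {s : Set L} {J K : LieIdeal R L} (h : ∀ x ∈ s, ∀ y ∈ J, ⁅x, y⁆ ∈ K) :
    ⁅lieSpan R L s, J⁆ ≤ K :=
  lie_le_iff_le_colon.2 (lieSpan_le.2 h)

theorem lie_lie_le_sup (X Y Z : LieIdeal R L) :
    ⁅X, ⁅Y, Z⁆⁆ ≤ ⁅⁅X, Y⁆, Z⁆ ⊔ ⁅⁅X, Z⁆, Y⁆ := by
  rw [lie_comm, lie_le_iff_le_colon, lie_le_iff]
  intro y hy z hz x hx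
  rw [lie_lie]
  refine sub_mem (le_sup_right (a := ⁅⁅X, Y⁆, Z⁆) ?_) (le_sup_left (b := ⁅⁅X, Z⁆, Y⁆) ?_)
  · rw [lie_comm]
    exact lie_mem_lie hy (by rw [lie_comm]; exact lie_mem_lie hz hx)
  · rw [lie_comm]
    exact lie_mem_lie hz (by rw [lie_comm]; exact lie_mem_lie hy hx)

end LieIdeal

section LeftNormed

open LieSubmodule LieIdeal

variable {R L : Type*} [CommRing R] [LieRing L] [LieAlgebra R L]

def lnbFrom (X : LieIdeal R L) (l : List (LieIdeal R L)) : LieIdeal R L :=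
  l.foldl (fun acc J => ⁅acc, J⁆) X

theorem lnbIdeal_cons (X : LieIdeal R L) (l : List (LieIdeal R L)) :
    lnbIdeal (X :: l) = lnbFrom X l := rfl

theorem lnbFrom_append_singleton (X J : LieIdeal R L) (l : List (LieIdeal R L)) :
    lnbFrom X (l ++ [J]) = ⁅lnbFrom X l, J⁆ :=
  List.foldl_concat ..

theorem lnbFrom_append (X : LieIdeal R L) (l₁ l₂ : List (LieIdeal R L)) :
    lnbFrom X (l₁ ++ l₂) = lnbFrom (lnbFrom X l₁) l₂ :=
  List.foldl_append

theorem lnbIdeal_append_singleton {l : List (LieIdeal R L)} (hl : l ≠ []) (J : LieIdeal R L) :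
    lnbIdeal (l ++ [J]) = ⁅lnbIdeal l, J⁆ := by
  obtain ⟨X, l, rfl⟩ := List.exists_cons_of_ne_nil hl
  exact lnbFrom_append_singleton X J l

theorem lnbFrom_mono {X Y : LieIdeal R L} (h : X ≤ Y) (l : List (LieIdeal R L)) :
    lnbFrom X l ≤ lnbFrom Y l := by
  induction l generalizing X Y with
  | nil => exact h
  | cons J l ih => exact ih (mono_lie_left J h)

theorem lnbFrom_antitone_of_sublist {l₁ l₂ : List (LieIdeal R L)} (h : l₁.Sublist l₂)
    (X : LieIdeal R L) : lnbFrom X l₂ ≤ lnbFrom X l₁ := by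
  induction h generalizing X with
  | slnil => exact le_rfl
  | cons J _ ih => exact (lnbFrom_mono (lie_le_left X J) _).trans (ih X)
  | cons_cons J _ ih => exact ih ⁅X, J⁆

def lnbPermSup (l : List (LieIdeal R L)) : LieIdeal R L :=
  ⨆ (K : List (LieIdeal R L)) (_ : K.Perm l), lnbIdeal K

theorem lnbIdeal_le_lnbPermSup {K l : List (LieIdeal R L)} (h : K.Perm l) :
    lnbIdeal K ≤ lnbPermSup l :=
  le_iSup₂_of_le K h le_rfl

theorem lie_lnbFrom_le (X Y : LieIdeal R L) (l : List (LieIdeal R L)) :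
    ⁅X, lnbFrom Y l⁆ ≤ ⨆ (K : List (LieIdeal R L)) (_ : K.Perm (Y :: l)), lnbFrom X K := by
  induction l using List.reverseRecOn generalizing X with
  | nil => exact le_iSup₂_of_le [Y] (List.Perm.refl _) le_rfl
  | append_singleton l Z ih =>
    rw [lnbFrom_append_singleton]
    refine (lie_lie_le_sup X _ Z).trans (sup_le ?_ ?_)
    · refine (mono_lie_left Z (ih X)).trans ?_
      simp only [iSup_lie]
      refine iSup₂_le fun K hK => le_iSup₂_of_le (K ++ [Z]) ?_ (lnbFrom_append_singleton ..).ge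
      simpa using hK.append_right [Z]
    · refine (ih ⁅X, Z⁆).trans (iSup₂_le fun K hK => le_iSup₂_of_le (Z :: K) ?_ le_rfl)
      exact (hK.cons Z).trans (by simpa using (List.perm_append_singleton Z (Y :: l)).symm)

theorem lie_lnbPermSup_le (l₁ l₂ : List (LieIdeal R L)) :
    ⁅lnbPermSup l₁, lnbPermSup l₂⁆ ≤ lnbPermSup (l₁ ++ l₂) := by
  simp only [lnbPermSup, iSup_lie, lie_iSup]
  refine iSup₂_le fun K₂ hK₂ => iSup₂_le fun K₁ hK₁ => ?_
  rcases K₁ with _ | ⟨X, K₁⟩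
  · simp [lnbIdeal, bot_lie]
  rcases K₂ with _ | ⟨Y, K₂⟩
  · simp [lnbIdeal, lie_bot]
  refine (lie_lnbFrom_le _ Y K₂).trans (iSup₂_le fun K hK => ?_)
  rw [lnbIdeal_cons, ← lnbFrom_append, ← lnbIdeal_cons, ← List.cons_append]
  exact lnbIdeal_le_lnbPermSup (hK₁.append (hK.trans hK₂))

end LeftNormed

section BracketArrangements

open LieSubmodule LieIdeal

variable {R L : Type*} [CommRing R] [LieRing L] [LieAlgebra R L]

theorem BracketArr.eval_node_leaf {t : ℕ} (β : BracketArr t) (a : Fin t → L) (x : L) :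
    (β.node .leaf).eval (Fin.snoc a x : Fin (t + 1) → L) = ⁅β.eval a, x⁆ := by
  simp only [BracketArr.eval]
  congr 1
  · congr 1
    funext i
    exact Fin.snoc_castSucc (α := fun _ => L) ..
  · exact Fin.snoc_last (α := fun _ => L) ..

theorem BracketArr.eval_mem_lnbPermSup {t : ℕ} (β : BracketArr t) (J : Fin t → LieIdeal R L)
    {a : Fin t → L} (ha : ∀ s, a s ∈ J s) : β.eval a ∈ lnbPermSup (List.ofFn J) := by
  induction β with
  | leaf =>
    refine lnbIdeal_le_lnbPermSup (List.Perm.refl _) ?_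
    simpa [lnbIdeal, BracketArr.eval] using ha 0
  | node u v ihu ihv =>
    rw [List.ofFn_add]
    exact lie_lnbPermSup_le _ _ (lie_mem_lie (ihu _ fun s => ha _) (ihv _ fun s => ha _))

theorem lnbIdeal_ofFn_le_lieSpan {t : ℕ} (J : Fin t → LieIdeal R L) :
    lnbIdeal (List.ofFn J) ≤ lieSpan R L
      {x | ∃ β : BracketArr t, ∃ a : Fin t → L, (∀ s, a s ∈ J s) ∧ x = β.eval a} := by
  induction t with
  | zero => simp [lnbIdeal]
  | succ t ih =>
    rcases t with _ | t
    · intro x hx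
      refine subset_lieSpan ⟨.leaf, fun _ => x, fun s => ?_, rfl⟩
      rw [Fin.fin_one_eq_zero s]
      simpa [lnbIdeal] using hx
    rw [List.ofFn_succ', List.concat_eq_append, lnbIdeal_append_singleton (by simp)]
    refine (mono_lie_left _ (ih _)).trans (lie_lieSpan_le ?_)
    rintro _ ⟨β, a, ha, rfl⟩ y hy
    refine subset_lieSpan ⟨β.node .leaf, Fin.snoc a y, fun s => ?_, (β.eval_node_leaf a y).symm⟩
    induction s using Fin.lastCases with
    | last => simpa using hy
    | cast i => simpa using ha i

end BracketArrangements

section SymBracketSum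

variable {R L : Type*} [CommRing R] [LieRing L] [LieAlgebra R L] {n : ℕ}

theorem lnbIdeal_map_le_symBracketSum_of_nodup (I : Fin n → LieIdeal R L) {l : List (Fin n)}
    (hnd : l.Nodup) (hl : ∀ i, i ∈ l) : lnbIdeal (l.map I) ≤ symBracketSum I := by
  let e : Fin l.length ≃ Fin n := hnd.getEquivOfForallMemList l hl
  have hlen : l.length = n := by simpa using Fintype.card_congr e
  have hσ : l.map I = List.ofFn fun s => I ((finCongr hlen.symm).trans e s) :=
    List.ext_getElem (by simp [hlen]) fun i _ _ => by simp [e]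
  exact hσ ▸ le_iSup (fun σ : Equiv.Perm (Fin n) => lnbIdeal (List.ofFn fun s => I (σ s))) _

/-- Deleting a later occurrence of an index only enlarges a left-normed bracket, so a covering
list can be reduced to a permutation of `Fin n` with the same head. -/
theorem lnbIdeal_map_le_symBracketSum (I : Fin n → LieIdeal R L) {l : List (Fin n)}
    (hl : ∀ i, i ∈ l) : lnbIdeal (l.map I) ≤ symBracketSum I := by
  rcases l with _ | ⟨j, l⟩
  · simp [lnbIdeal]
  set d := j :: (l.filter (· ≠ j)).dedup
  have hsub : d.Sublist (j :: l) :=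
    ((List.dedup_sublist _).trans List.filter_sublist).cons_cons j
  have hnd : d.Nodup := List.nodup_cons.2 ⟨by simp [List.mem_dedup], List.nodup_dedup _⟩
  have hd : ∀ i, i ∈ d := fun i => by
    by_cases hij : i = j
    · simp [d, hij]
    · simpa [d, List.mem_dedup, hij] using hl i
  refine le_trans ?_ (lnbIdeal_map_le_symBracketSum_of_nodup I hnd hd)
  exact lnbFrom_antitone_of_sublist (hsub.map I).tail (I j)

theorem lnbPermSup_map_le_symBracketSum (I : Fin n → LieIdeal R L) {l : List (Fin n)}
    (hl : ∀ i, i ∈ l) : lnbPermSup (l.map I) ≤ symBracketSum I := by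
  refine iSup₂_le fun K hK => ?_
  rw [← congrFun₂ (List.eq_map_comp_perm I) K l] at hK
  obtain ⟨l', rfl, hl'⟩ := hK
  exact lnbIdeal_map_le_symBracketSum I fun i => hl'.mem_iff.2 (hl i)

end SymBracketSum

theorem fatBracketSum_eq_symBracketSum_general {R : Type*} [CommRing R] {L : Type*} [LieRing L]
    [LieAlgebra R L] {n : ℕ} (I : Fin n → LieIdeal R L) :
    fatBracketSum I = symBracketSum I := by
  apply le_antisymm
  · rw [fatBracketSum, LieSubmodule.lieSpan_le]
    rintro _ ⟨t, -, β, idx, hidx, a, ha, rfl⟩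
    have hmem := β.eval_mem_lnbPermSup (I ∘ idx) ha
    rw [← List.map_ofFn] at hmem
    exact lnbPermSup_map_le_symBracketSum I (fun i => List.mem_ofFn.2 (hidx i)) hmem
  · refine iSup_le fun σ => (lnbIdeal_ofFn_le_lieSpan _).trans (LieSubmodule.lieSpan_mono ?_)
    rintro _ ⟨β, a, ha, rfl⟩
    exact ⟨n, le_rfl, β, σ, σ.surjective, a, ha, rfl⟩

/-- **Statement 11.** Let `L` be a Lie algebra over a commutative ring and `I₁, …, I_n` Lie
ideals of `L` with `n ≥ 2`.  Then the fat bracket sum equals the symmetric bracket sum: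
`[[I₁, I₂, …, I_n]] = [[I₁, I₂], …, I_n]_S`. -/
theorem fatBracketSum_eq_symBracketSum {R : Type*} [CommRing R] {L : Type*} [LieRing L]
    [LieAlgebra R L] {n : ℕ} (hn : 2 ≤ n) (I : Fin n → LieIdeal R L) :
    fatBracketSum I = symBracketSum I :=
  fatBracketSum_eq_symBracketSum_general I
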